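/- Let q ≡ 1 (mod 4) be a prime power, n ≥ 1, A ∈ GL_n(F_q), b ∈ F_q^n. The permutation of F_q^n given by x ↦ Ax + b is even if and only if det(A) is a square in F_q^*. -/

import Mathlib

/-!
The map `U ↦ sign (x ↦ U x)` is a character of `GL_n(F_q)`, so it is enough to compute it on
transvections and diagonal matrices, which together generate. A transvection, like a translation,
has odd order `p`, hence sign `1`. A diagonal matrix is a product of one-coordinate dilations, and
the dilation by `c` splits `F_q^n` into `q^(n-1)` (an odd number of) copies of multiplication by `c`
on `F_q`; so everything reduces to the sign character of `F_q^*` acting on `F_q`. Multiplication by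
a generator of the cyclic group `F_q^*` is a single cycle of even length `q - 1`, so this
character is nontrivial, and its kernel is the index-2 subgroup of squares.
-/

open Equiv Equiv.Perm Matrix

theorem Equiv.Perm.sign_eq_one_of_pow_eq_one {α : Type*} [DecidableEq α] [Fintype α]
    {σ : Perm α} {m : ℕ} (hm : Odd m) (h : σ ^ m = 1) : sign σ = 1 := by
  rw [← pow_one (sign σ), ← Nat.odd_iff.mp hm, ← Int.units_pow_eq_pow_mod_two, ← map_pow, h,
    map_one]

theorem Equiv.pow_addRight {V : Type*} [AddGroup V] (b : V) (m : ℕ) :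
    Equiv.addRight b ^ m = Equiv.addRight (m • b) := by
  induction m with
  | zero => simp
  | succ m ih => rw [pow_succ, ih, succ_nsmul', addRight_add]

theorem Matrix.transvection_pow {ι R : Type*} [Fintype ι] [DecidableEq ι] [CommRing R]
    {i j : ι} (hij : i ≠ j) (c : R) (m : ℕ) :
    transvection i j c ^ m = transvection i j (m * c) := by
  induction m with
  | zero => simp [transvection_zero]
  | succ m ih =>
    rw [pow_succ, ih, transvection_mul_transvection_same i j hij, Nat.cast_succ, add_one_mul]

theorem Units.isSquare_val_iff {G₀ : Type*} [GroupWithZero G₀] (u : G₀ˣ) :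
    IsSquare (u : G₀) ↔ IsSquare u := by
  constructor
  · rintro ⟨a, ha⟩
    have ha0 : a ≠ 0 := by
      rintro rfl
      simp at ha
    exact ⟨Units.mk0 a ha0, Units.ext (by simpa using ha)⟩
  · rintro ⟨v, rfl⟩
    exact ⟨v, by simp⟩

theorem map_eq_one_iff_isSquare_of_map_generator {G : Type*} [Group G] (f : G →* ℤˣ) {g : G}
    (hg : ∀ x, x ∈ Subgroup.zpowers g) (hfg : f g = -1) (u : G) : f u = 1 ↔ IsSquare u := by
  obtain ⟨k, rfl⟩ := hg u
  constructor
  · intro h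
    have hk : Even k := by
      by_contra hk
      rw [map_zpow, hfg, (Int.not_even_iff_odd.mp hk).neg_one_zpow] at h
      exact absurd h (by decide)
    exact hk.isSquare_zpow g
  · rintro ⟨v, hv⟩
    rw [hv, map_mul, Int.units_mul_self]

section FiniteField

variable {F : Type*} [Field F] [Fintype F]

theorem sign_addRight {V : Type*} [AddCommGroup V] [Module F V] [Fintype V] [DecidableEq V]
    (hF : Odd (Fintype.card F)) (b : V) : sign (Equiv.addRight b) = 1 :=
  sign_eq_one_of_pow_eq_one hF <| by
    rw [pow_addRight, ← Nat.cast_smul_eq_nsmul F, FiniteField.cast_card_eq_zero, zero_smul,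
      addRight_zero, Perm.one_def]

variable [DecidableEq F]

variable (F) in
def unitsSign : Fˣ →* ℤˣ := sign.comp (MulAction.toPermHom Fˣ F)

theorem unitsSign_eq_neg_one_of_forall_mem_zpowers (hF : Odd (Fintype.card F)) {g : Fˣ}
    (hg : ∀ x, x ∈ Subgroup.zpowers g) : unitsSign F g = -1 := by
  set σ : Perm F := MulAction.toPerm g
  have hg1 : g ≠ 1 := by
    rintro rfl
    have h1 : Fintype.card Fˣ = 1 := Fintype.card_eq_one_iff.2 ⟨1, fun x => by
      obtain ⟨k, rfl⟩ := hg x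
      simp⟩
    have h2 : 1 < Fintype.card F := Fintype.one_lt_card
    obtain ⟨r, hr⟩ := hF
    rw [Fintype.card_units] at h1
    omega
  have hmoved : ∀ y : F, σ y ≠ y ↔ y ≠ 0 := fun y => by
    simp only [σ, MulAction.toPerm_apply, Units.smul_def, smul_eq_mul, ne_eq, mul_left_eq_self₀,
      Units.val_eq_one, hg1, false_or]
  have hcycle : σ.IsCycle := by
    refine ⟨1, (hmoved 1).2 one_ne_zero, fun y hy => ?_⟩
    obtain ⟨k, hk⟩ := hg (Units.mk0 y ((hmoved y).1 hy))
    refine ⟨k, ?_⟩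
    change (MulAction.toPermHom Fˣ F g ^ k) 1 = y
    rw [← map_zpow, show g ^ k = _ from hk]
    simp [Units.smul_def]
  have hsupport : σ.support = {0}ᶜ := by
    ext y
    simp [mem_support, hmoved]
  have heven : Even (Fintype.card F - 1) := Nat.Odd.sub_odd hF odd_one
  rw [unitsSign, MonoidHom.comp_apply, MulAction.toPermHom_apply, hcycle.sign, hsupport,
    Finset.card_compl, Finset.card_singleton, heven.neg_one_pow]

theorem unitsSign_eq_one_iff (hF : Odd (Fintype.card F)) (u : Fˣ) :
    unitsSign F u = 1 ↔ IsSquare u := by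
  obtain ⟨g, hg⟩ := IsCyclic.exists_generator (α := Fˣ)
  exact map_eq_one_iff_isSquare_of_map_generator _ hg
    (unitsSign_eq_neg_one_of_forall_mem_zpowers hF hg) u

end FiniteField

namespace Matrix.GeneralLinearGroup

variable {ι R : Type*} [Fintype ι] [DecidableEq ι] [CommRing R]

def toPerm : GL ι R →* Perm (ι → R) :=
  (MulAction.toPermHom _ (ι → R)).comp toLin.toMonoidHom

@[simp]
theorem toPerm_apply (U : GL ι R) (x : ι → R) : toPerm U x = (U : Matrix ι ι R) *ᵥ x := rfl

def diagonalUnits : (ι → Rˣ) →* GL ι R :=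
  (Units.map (diagonalRingHom ι R).toMonoidHom).comp MulEquiv.piUnits.symm.toMonoidHom

@[simp]
theorem val_diagonalUnits (d : ι → Rˣ) :
    (diagonalUnits d : Matrix ι ι R) = diagonal fun i => (d i : R) := rfl

@[simp]
theorem det_diagonalUnits (d : ι → Rˣ) : det (diagonalUnits d) = ∏ i, d i := by
  ext
  simp

variable {F : Type*} [Field F] [Fintype F] [DecidableEq F]

theorem sign_toPerm_of_val_eq_transvection (hF : Odd (Fintype.card F)) {U : GL ι F}
    {t : TransvectionStruct ι F} (hU : (U : Matrix ι ι F) = t.toMatrix) :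
    sign (toPerm U) = 1 := by
  refine sign_eq_one_of_pow_eq_one hF ?_
  rw [← map_pow, show U ^ Fintype.card F = 1 from Units.ext ?_, map_one]
  rw [Units.val_pow_eq_pow_val, hU, TransvectionStruct.toMatrix, transvection_pow t.hij,
    FiniteField.cast_card_eq_zero, zero_mul, transvection_zero, Units.val_one]

theorem sign_toPerm_diagonalUnits_mulSingle (hF : Odd (Fintype.card F)) (i : ι) (c : Fˣ) :
    sign (toPerm (diagonalUnits (Pi.mulSingle i c))) = unitsSign F c := by
  rw [sign_eq_sign_of_equiv _ (prodCongrLeft fun _ => MulAction.toPerm c) (funSplitAt i F),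
    sign_prodCongrLeft, Finset.prod_const, Finset.card_univ, Fintype.card_fun,
    Int.units_pow_eq_pow_mod_two, Nat.odd_iff.mp hF.pow, pow_one]
  · rfl
  · intro x
    ext j
    · simp [mulVec_diagonal, Units.smul_def]
    · simp [mulVec_diagonal, Pi.mulSingle_eq_of_ne j.2]

theorem sign_toPerm_diagonalUnits (hF : Odd (Fintype.card F)) (d : ι → Fˣ) :
    sign (toPerm (diagonalUnits d)) = unitsSign F (det (diagonalUnits d)) := by
  have := MonoidHom.functions_ext ℤˣ (sign.comp (toPerm.comp (diagonalUnits (ι := ι))))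
    ((unitsSign F).comp (det.comp diagonalUnits)) fun i c => ?_
  · exact DFunLike.congr_fun this d
  · simp [sign_toPerm_diagonalUnits_mulSingle hF, Finset.prod_pi_mulSingle']

theorem sign_toPerm (hF : Odd (Fintype.card F)) (U : GL ι F) :
    sign (toPerm U) = unitsSign F (det U) := by
  refine diagonal_transvection_induction_of_det_ne_zero
    (fun M => ∀ U : GL ι F, (U : Matrix ι ι F) = M → sign (toPerm U) = unitsSign F (det U))
    U U.det_ne_zero ?diag ?transvec ?mul U rfl
  case diag =>
    intro D hD U hU
    have hD0 (i : ι) : D i ≠ 0 := by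
      rw [det_diagonal] at hD
      exact Finset.prod_ne_zero_iff.mp hD i (Finset.mem_univ i)
    obtain rfl : U = diagonalUnits fun i => Units.mk0 (D i) (hD0 i) := Units.ext (by simp [hU])
    exact sign_toPerm_diagonalUnits hF _
  case transvec =>
    intro t U hU
    rw [sign_toPerm_of_val_eq_transvection hF hU, show det U = 1 from Units.ext (by simp [hU]),
      map_one]
  case mul =>
    intro A B hA hB ihA ihB U hU
    obtain rfl : U = mkOfDetNeZero A hA * mkOfDetNeZero B hB := Units.ext (by simp [hU])
    rw [map_mul, map_mul, map_mul, map_mul, ihA (mkOfDetNeZero A hA) rfl,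
      ihB (mkOfDetNeZero B hB) rfl]

end Matrix.GeneralLinearGroup

theorem stmt12_general (q n : ℕ) (hq : q % 4 = 1)
    (F : Type) [Field F] [Fintype F] [DecidableEq F] (hcard : Fintype.card F = q)
    (A : Matrix (Fin n) (Fin n) F) (hA : IsUnit A) (b : Fin n → F)
    (σ : Equiv.Perm (Fin n → F)) (hσ : ∀ x, σ x = A.mulVec x + b) :
    Equiv.Perm.sign σ = 1 ↔ IsSquare A.det := by
  have hF : Odd (Fintype.card F) := Nat.odd_iff.mpr (by omega)
  have hσ_eq : σ = Equiv.addRight b * GeneralLinearGroup.toPerm hA.unit := by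
    ext x : 1
    rw [hσ, Perm.mul_apply, GeneralLinearGroup.toPerm_apply, hA.unit_spec, coe_addRight]
  rw [hσ_eq, map_mul, sign_addRight hF, one_mul, GeneralLinearGroup.sign_toPerm hF,
    unitsSign_eq_one_iff hF, ← Units.isSquare_val_iff, GeneralLinearGroup.val_det_apply,
    hA.unit_spec]

/-- For `q ≡ 1 (mod 4)`, the permutation `x ↦ Ax + b` of
`F_q^n` is even if and only if `det A` is a square in `F_q^*`. -/
theorem stmt12 (q n : ℕ) (hq : q % 4 = 1) (hn : 1 ≤ n)
    (F : Type) [Field F] [Fintype F] [DecidableEq F] (hcard : Fintype.card F = q)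
    (A : Matrix (Fin n) (Fin n) F) (hA : IsUnit A) (b : Fin n → F)
    (σ : Equiv.Perm (Fin n → F)) (hσ : ∀ x, σ x = A.mulVec x + b) :
    Equiv.Perm.sign σ = 1 ↔ IsSquare A.det :=
  stmt12_general q n hq F hcard A hA b σ hσ
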